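/- arXiv:2502.02270 — 8 statements merged into one kernel-verified Lean document; each statement's English description precedes it below -/
import Mathlib

section
/- Let d, n ∈ ℕ and let x_1(0), …, x_n(0) ∈ ℝ^d. Suppose v ∈ ℝ^d satisfies ⟨v, x_i(0)⟩ ≠ 0 for all i ∈ {1,…,n}, and that there exist unique indices M and m such that ⟨v, x_M(0)⟩ > ⟨v, x_j(0)⟩ for all j ≠ M and ⟨v, x_m(0)⟩ < ⟨v, x_j(0)⟩ for all j ≠ m. Let γ ∈ (0,1] and consider the hardmax self-attention dynamics with parameter matrix A = v vᵀ. Then for every i ∈ {1,…,n}: if ⟨v, x_i(0)⟩ > 0 then x_i(k) → x_M(0) as k → ∞, and if ⟨v, x_i(0)⟩ < 0 then x_i(k) → x_m(0) as k → ∞. In particular, the dynamics converge to an equilibrium consisting of n₁ copies of x_m(0) and n₂ copies of x_M(0) with n₁ + n₂ = n, and for γ = 1 convergence takes place in one step. -/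
open Filter Topology Matrix

open Classical in
/-- Hardmax cluster set: indices `j` where `⟨A x_i, x_j⟩` attains its maximum over the tuple. -/
noncomputable def cluster {d n : ℕ} (X : Fin n → (Fin d → ℝ))
    (A : Matrix (Fin d) (Fin d) ℝ) (i : Fin n) : Finset (Fin n) :=
  Finset.univ.filter fun j => ∀ ℓ, A.mulVec (X i) ⬝ᵥ X ℓ ≤ A.mulVec (X i) ⬝ᵥ X j

/-- Hardmax self-attention dynamics:
`x_i(k+1) = (1−γ) x_i(k) + (γ/|C_i(X(k),A)|) Σ_{ℓ ∈ C_i(X(k),A)} x_ℓ(k)`. -/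
noncomputable def traj {d n : ℕ} (γ : ℝ) (A : Matrix (Fin d) (Fin d) ℝ)
    (X0 : Fin n → (Fin d → ℝ)) : ℕ → Fin n → (Fin d → ℝ)
  | 0 => X0
  | k + 1 => fun i =>
      (1 - γ) • traj γ A X0 k i +
        (γ / ((cluster (traj γ A X0 k) A i).card : ℝ)) •
          ∑ ℓ ∈ cluster (traj γ A X0 k) A i, traj γ A X0 k ℓ

lemma vvT_dot {d : ℕ} (v x y : Fin d → ℝ) :
    (vecMulVec v v).mulVec x ⬝ᵥ y = (v ⬝ᵥ x) * (v ⬝ᵥ y) := by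
  simp only [mulVec, dotProduct, vecMulVec_apply, Finset.sum_mul, Finset.mul_sum]
  congr 1; ext i; congr 1; ext j; ring

lemma aux_step {d n : ℕ} (X0 : Fin n → Fin d → ℝ) (v : Fin d → ℝ)
    (hv : ∀ i, v ⬝ᵥ X0 i ≠ 0) (M m : Fin n)
    (hM : ∀ j, j ≠ M → v ⬝ᵥ X0 j < v ⬝ᵥ X0 M)
    (hm : ∀ j, j ≠ m → v ⬝ᵥ X0 m < v ⬝ᵥ X0 j)
    (γ : ℝ) (hγ0 : 0 < γ) (hγ1 : γ ≤ 1) (k : ℕ)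
    (IH : ∀ i, (0 < v ⬝ᵥ X0 i → traj γ (vecMulVec v v) X0 k i
        = (1-γ)^k • X0 i + (1-(1-γ)^k) • X0 M)
      ∧ (v ⬝ᵥ X0 i < 0 → traj γ (vecMulVec v v) X0 k i
        = (1-γ)^k • X0 i + (1-(1-γ)^k) • X0 m))
    (i : Fin n) (hi : 0 < v ⬝ᵥ X0 i) :
    traj γ (vecMulVec v v) X0 (k+1) i
      = (1-γ)^(k+1) • X0 i + (1-(1-γ)^(k+1)) • X0 M := by
  set a : ℝ := (1-γ)^k with ha
  have ha0 : 0 ≤ a := pow_nonneg (by linarith) k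
  have ha1 : a ≤ 1 := pow_le_one₀ (by linarith) (by linarith)
  set X := traj γ (vecMulVec v v) X0 k with hX
  have hpM : 0 < v ⬝ᵥ X0 M := by
    rcases eq_or_ne i M with rfl | h
    · exact hi
    · exact hi.trans (hM i h)
  -- projections of current state
  have hq : ∀ j, 0 < v ⬝ᵥ X0 j → v ⬝ᵥ X j = a * (v ⬝ᵥ X0 j) + (1-a) * (v ⬝ᵥ X0 M) := by
    intro j hj
    rw [(IH j).1 hj, dotProduct_add, dotProduct_smul, dotProduct_smul]
    simp [smul_eq_mul]
  have hq' : ∀ j, v ⬝ᵥ X0 j < 0 → v ⬝ᵥ X j = a * (v ⬝ᵥ X0 j) + (1-a) * (v ⬝ᵥ X0 m) := by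
    intro j hj
    rw [(IH j).2 hj, dotProduct_add, dotProduct_smul, dotProduct_smul]
    simp [smul_eq_mul]
  have hpiM : v ⬝ᵥ X0 i ≤ v ⬝ᵥ X0 M := by
    rcases eq_or_ne i M with rfl | h
    · exact le_rfl
    · exact (hM i h).le
  have hqi : 0 < v ⬝ᵥ X i := by
    rw [hq i hi]; nlinarith [mul_nonneg (sub_nonneg.2 ha1) (sub_nonneg.2 hpiM)]
  have hqM : v ⬝ᵥ X M = v ⬝ᵥ X0 M := by rw [hq M hpM]; ring
  -- every element of the cluster currently equals X0 M
  have hcl : ∀ ℓ ∈ cluster X (vecMulVec v v) i, X ℓ = X0 M := by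
    intro ℓ hℓ
    rw [cluster, Finset.mem_filter] at hℓ
    have hmax : ∀ j, v ⬝ᵥ X j ≤ v ⬝ᵥ X ℓ := by
      intro j
      have := hℓ.2 j
      rw [vvT_dot, vvT_dot] at this
      exact le_of_mul_le_mul_left this hqi
    have hMle : v ⬝ᵥ X0 M ≤ v ⬝ᵥ X ℓ := hqM ▸ hmax M
    rcases lt_or_gt_of_ne (hv ℓ) with hneg | hpos
    · exfalso
      have hml : v ⬝ᵥ X0 m < 0 := by
        rcases eq_or_ne ℓ m with rfl | h
        · exact hneg
        · exact (hm ℓ h).trans hneg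
      rw [hq' ℓ hneg] at hMle
      nlinarith [mul_nonpos_of_nonneg_of_nonpos ha0 hneg.le,
        mul_nonpos_of_nonneg_of_nonpos (sub_nonneg.2 ha1) hml.le]
    · have hlM : v ⬝ᵥ X0 ℓ ≤ v ⬝ᵥ X0 M := by
        rcases eq_or_ne ℓ M with rfl | h
        · exact le_rfl
        · exact (hM ℓ h).le
      rw [hq ℓ hpos] at hMle
      have h0 : a * (v ⬝ᵥ X0 M - v ⬝ᵥ X0 ℓ) = 0 := by
        have h1 : a * (v ⬝ᵥ X0 M - v ⬝ᵥ X0 ℓ) ≤ 0 := by nlinarith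
        have h2 : 0 ≤ a * (v ⬝ᵥ X0 M - v ⬝ᵥ X0 ℓ) :=
          mul_nonneg ha0 (sub_nonneg.2 hlM)
        linarith
      rcases mul_eq_zero.1 h0 with h1 | h1
      · rw [(IH ℓ).1 hpos, h1]; simp
      · have : ℓ = M := by
          by_contra h
          exact absurd (sub_eq_zero.1 h1) (ne_of_gt (hM ℓ h))
        subst this
        rw [(IH ℓ).1 hpos]
        module
  -- the cluster is nonempty
  have hne : (cluster X (vecMulVec v v) i).Nonempty := by
    obtain ⟨ℓ, -, hℓ⟩ := Finset.exists_max_image Finset.univ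
      (fun j => (vecMulVec v v).mulVec (X i) ⬝ᵥ X j) ⟨i, Finset.mem_univ i⟩
    exact ⟨ℓ, by
      rw [cluster, Finset.mem_filter]
      exact ⟨Finset.mem_univ ℓ, fun j => hℓ j (Finset.mem_univ j)⟩⟩
  have hcard : ((cluster X (vecMulVec v v) i).card : ℝ) ≠ 0 := by
    exact_mod_cast Finset.card_ne_zero_of_mem hne.choose_spec
  -- compute the step
  have hsum : ∑ ℓ ∈ cluster X (vecMulVec v v) i, X ℓ
      = ((cluster X (vecMulVec v v) i).card : ℝ) • X0 M := by
    rw [Finset.sum_congr rfl hcl, Finset.sum_const, Nat.cast_smul_eq_nsmul]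
  show (1 - γ) • X i + (γ / ((cluster X (vecMulVec v v) i).card : ℝ)) •
      ∑ ℓ ∈ cluster X (vecMulVec v v) i, X ℓ = _
  rw [hsum, smul_smul, div_mul_cancel₀ _ hcard, (IH i).1 hi, pow_succ, ← ha]
  module

lemma invariant {d n : ℕ} (X0 : Fin n → Fin d → ℝ) (v : Fin d → ℝ)
    (hv : ∀ i, v ⬝ᵥ X0 i ≠ 0) (M m : Fin n)
    (hM : ∀ j, j ≠ M → v ⬝ᵥ X0 j < v ⬝ᵥ X0 M)
    (hm : ∀ j, j ≠ m → v ⬝ᵥ X0 m < v ⬝ᵥ X0 j)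
    (γ : ℝ) (hγ0 : 0 < γ) (hγ1 : γ ≤ 1) :
    ∀ k i, (0 < v ⬝ᵥ X0 i → traj γ (vecMulVec v v) X0 k i
        = (1-γ)^k • X0 i + (1-(1-γ)^k) • X0 M)
      ∧ (v ⬝ᵥ X0 i < 0 → traj γ (vecMulVec v v) X0 k i
        = (1-γ)^k • X0 i + (1-(1-γ)^k) • X0 m) := by
  have hneg : vecMulVec (-v) (-v) = vecMulVec v v := by
    ext i j; simp [vecMulVec_apply]
  intro k
  induction k with
  | zero => intro i; constructor <;> intro _ <;> simp [traj]
  | succ k ih =>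
    intro i
    refine ⟨aux_step X0 v hv M m hM hm γ hγ0 hγ1 k ih i, fun hi => ?_⟩
    have h := aux_step X0 (-v) (fun j => by simpa using hv j) m M
      (fun j hj => by simpa using hm j hj)
      (fun j hj => by simpa using hM j hj) γ hγ0 hγ1 k
      (fun j => ⟨fun hj => by
          rw [hneg]; exact (ih j).2 (by simpa [neg_dotProduct] using hj),
        fun hj => by
          rw [hneg]; exact (ih j).1 (by simpa [neg_dotProduct] using hj)⟩)
      i (by simpa [neg_dotProduct] using hi)
    rw [hneg] at h
    exact h

/-- **Asymptotics of rank-one hardmax self-attention dynamics** (`A = v vᵀ`):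
tokens with positive projection onto `v` converge to `x_M(0)`, tokens with negative
projection converge to `x_m(0)`; for `γ = 1` convergence takes place in one step. -/
theorem rank_one_asymptotics {d n : ℕ}
    (X0 : Fin n → (Fin d → ℝ)) (v : Fin d → ℝ)
    (hv : ∀ i, v ⬝ᵥ X0 i ≠ 0)
    (M m : Fin n)
    (hM : ∀ j, j ≠ M → v ⬝ᵥ X0 j < v ⬝ᵥ X0 M)
    (hm : ∀ j, j ≠ m → v ⬝ᵥ X0 m < v ⬝ᵥ X0 j)
    (γ : ℝ) (hγ0 : 0 < γ) (hγ1 : γ ≤ 1) :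
    (∀ i, 0 < v ⬝ᵥ X0 i →
      Tendsto (fun k => traj γ (Matrix.vecMulVec v v) X0 k i) atTop (𝓝 (X0 M))) ∧
    (∀ i, v ⬝ᵥ X0 i < 0 →
      Tendsto (fun k => traj γ (Matrix.vecMulVec v v) X0 k i) atTop (𝓝 (X0 m))) ∧
    (γ = 1 → ∀ k, 1 ≤ k → ∀ i,
      (0 < v ⬝ᵥ X0 i → traj γ (Matrix.vecMulVec v v) X0 k i = X0 M) ∧
      (v ⬝ᵥ X0 i < 0 → traj γ (Matrix.vecMulVec v v) X0 k i = X0 m)) := by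
  have key := invariant X0 v hv M m hM hm γ hγ0 hγ1
  have hlim : Tendsto (fun k => (1-γ)^k) atTop (𝓝 (0:ℝ)) :=
    tendsto_pow_atTop_nhds_zero_of_lt_one (by linarith) (by linarith)
  have hgen : ∀ (w : Fin d → ℝ) (x : Fin d → ℝ),
      Tendsto (fun k => (1-γ)^k • x + (1-(1-γ)^k) • w) atTop (𝓝 w) := by
    intro w x
    have h1 := hlim.smul_const x
    have h2 := ((tendsto_const_nhds : Tendsto (fun _ : ℕ => (1:ℝ)) atTop (𝓝 1)).sub hlim).smul_const w
    simpa using h1.add h2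
  refine ⟨fun i hi => ?_, fun i hi => ?_, fun hγ k hk i => ?_⟩
  · exact (hgen (X0 M) (X0 i)).congr fun k => ((key k i).1 hi).symm
  · exact (hgen (X0 m) (X0 i)).congr fun k => ((key k i).2 hi).symm
  · have hz : (1-γ)^k = (0:ℝ) := by
      rw [hγ]; simp [zero_pow (by omega : k ≠ 0)]
    exact ⟨fun hi => by rw [(key k i).1 hi, hz]; simp,
      fun hi => by rw [(key k i).2 hi, hz]; simp⟩
end

section
/- Let d, n ∈ ℕ and let x_1(0), …, x_n(0) ∈ ℝ^d. Suppose v ∈ ℝ^d satisfies ⟨v, x_i(0)⟩ ≠ 0 for all i ∈ {1,…,n}, and that there exist unique indices M and m such that ⟨v, x_M(0)⟩ > ⟨v, x_j(0)⟩ for all j ≠ M and ⟨v, x_m(0)⟩ < ⟨v, x_j(0)⟩ for all j ≠ m. Let γ ∈ (0,1) and consider the hardmax self-attention dynamics with parameter matrix A = v vᵀ. Then for every k ≥ 0 and every i ∈ {1,…,n}: if ⟨v, x_i(0)⟩ > 0 then 0 < ⟨v, x_i(k)⟩ ≤ ⟨v, x_M(0)⟩ and C_i(X(k), v vᵀ)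 = {M}; and if ⟨v, x_i(0)⟩ < 0 then ⟨v, x_m(0)⟩ ≤ ⟨v, x_i(k)⟩ < 0 and C_i(X(k), v vᵀ) = {m}. -/
/-
With `A = v vᵀ` the attention score `⟨A x_i, x_j⟩` is `⟨v, x_i⟩ ⟨v, x_j⟩`, so as long as `M` and `m`
are the strict extremes of the projections `⟨v, x_j⟩`, a token with positive projection attends
only to `M` and one with negative projection only to `m`. The projections then move by the convex
combinations `p ↦ (1 - γ) p + γ p_M` and `p ↦ (1 - γ) p + γ p_m`, which preserve signs, keep `M` and
`m` the strict extremes (as `γ < 1`), and never raise the maximum nor lower the minimum; induction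
on `k` finishes the proof.
-/

open Filter Topology Matrix

theorem le_of_forall_ne_lt {ι α : Type*} [Preorder α] {p : ι → α} {M : ι}
    (hM : ∀ j ≠ M, p j < p M) (i : ι) : p i ≤ p M := by
  rcases eq_or_ne i M with rfl | hi
  exacts [le_rfl, (hM i hi).le]

theorem le_of_forall_ne_gt {ι α : Type*} [Preorder α] {p : ι → α} {m : ι}
    (hm : ∀ j ≠ m, p m < p j) (i : ι) : p m ≤ p i :=
  le_of_forall_ne_lt (α := αᵒᵈ) hm i

section ProjectedStep

variable {ι : Type*} {γ : ℝ} {M m : ι} {p q : ι → ℝ}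

/-- The projections `p`, `q` of two consecutive states of the rank-one dynamics onto `v`, when `M`
and `m` are the strict maximiser and minimiser of `p`. -/
structure IsProjectedStep (γ : ℝ) (M m : ι) (p q : ι → ℝ) : Prop where
  of_pos : ∀ i, 0 < p i → q i = (1 - γ) * p i + γ * p M
  of_neg : ∀ i, p i < 0 → q i = (1 - γ) * p i + γ * p m

theorem IsProjectedStep.neg (h : IsProjectedStep γ M m p q) :
    IsProjectedStep γ m M (-p) (-q) where
  of_pos i hi := by
    simp only [Pi.neg_apply] at hi ⊢
    rw [h.of_neg i (neg_pos.mp hi)]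
    ring
  of_neg i hi := by
    simp only [Pi.neg_apply] at hi ⊢
    rw [h.of_pos i (neg_neg_iff_pos.mp hi)]
    ring

theorem IsProjectedStep.pos_of_pos (h : IsProjectedStep γ M m p q) (hγ : 0 ≤ γ)
    (hM : ∀ j ≠ M, p j < p M) {i : ι} (hi : 0 < p i) : 0 < q i := by
  have := le_of_forall_ne_lt hM i
  rw [h.of_pos i hi]
  nlinarith

theorem IsProjectedStep.apply_max_le (h : IsProjectedStep γ M m p q) (hγ : 0 ≤ γ)
    (hp : ∀ i, p i ≠ 0) (hM : ∀ j ≠ M, p j < p M) : q M ≤ p M := by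
  rcases (hp M).lt_or_gt with hneg | hpos
  · have := le_of_forall_ne_lt hM m
    rw [h.of_neg M hneg]
    nlinarith
  · rw [h.of_pos M hpos]
    linarith

theorem IsProjectedStep.isMax (h : IsProjectedStep γ M m p q) (hγ0 : 0 ≤ γ) (hγ1 : γ < 1)
    (hp : ∀ i, p i ≠ 0) (hM : ∀ j ≠ M, p j < p M) : ∀ j ≠ M, q j < q M := by
  intro j hj
  rcases (hp M).lt_or_gt with hneg | hpos
  · have hj_neg := (hM j hj).trans hneg
    rw [h.of_neg M hneg, h.of_neg j hj_neg]
    nlinarith [hM j hj]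
  · have hqM : q M = p M := by rw [h.of_pos M hpos]; ring
    have hjM := hM j hj
    rw [hqM]
    rcases (hp j).lt_or_gt with hj_neg | hj_pos
    · have := le_of_forall_ne_lt hM m
      rw [h.of_neg j hj_neg]
      nlinarith
    · rw [h.of_pos j hj_pos]
      nlinarith

end ProjectedStep

section Invariant

variable {ι : Type*} {γ : ℝ} {M m : ι} {p₀ p q : ι → ℝ}

structure ProjectionInvariant (p₀ p : ι → ℝ) (M m : ι) : Prop where
  pos : ∀ i, 0 < p₀ i → 0 < p i
  neg : ∀ i, p₀ i < 0 → p i < 0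
  isMax : ∀ j ≠ M, p j < p M
  isMin : ∀ j ≠ m, p m < p j
  max_le_max₀ : p M ≤ p₀ M
  min₀_le_min : p₀ m ≤ p m

theorem ProjectionInvariant.init (hM : ∀ j ≠ M, p₀ j < p₀ M) (hm : ∀ j ≠ m, p₀ m < p₀ j) :
    ProjectionInvariant p₀ p₀ M m :=
  ⟨fun _ => id, fun _ => id, hM, hm, le_rfl, le_rfl⟩

theorem ProjectionInvariant.le_max₀ (h : ProjectionInvariant p₀ p M m) (i : ι) : p i ≤ p₀ M :=
  (le_of_forall_ne_lt h.isMax i).trans h.max_le_max₀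

theorem ProjectionInvariant.min₀_le (h : ProjectionInvariant p₀ p M m) (i : ι) : p₀ m ≤ p i :=
  h.min₀_le_min.trans (le_of_forall_ne_gt h.isMin i)

theorem ProjectionInvariant.ne_zero (h : ProjectionInvariant p₀ p M m) (hp₀ : ∀ i, p₀ i ≠ 0)
    (i : ι) : p i ≠ 0 :=
  ((hp₀ i).lt_or_gt.elim (fun hi => (h.neg i hi).ne) fun hi => (h.pos i hi).ne')

-- The negative half of each step is the positive half for `-p`, with `M` and `m` swapped.
theorem ProjectionInvariant.step (h : ProjectionInvariant p₀ p M m) (hp₀ : ∀ i, p₀ i ≠ 0)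
    (hs : IsProjectedStep γ M m p q) (hγ0 : 0 ≤ γ) (hγ1 : γ < 1) :
    ProjectionInvariant p₀ q M m := by
  have hp := h.ne_zero hp₀
  have hp' : ∀ i, (-p) i ≠ 0 := fun i => neg_ne_zero.mpr (hp i)
  have hm' : ∀ j ≠ m, (-p) j < (-p) m := fun j hj => neg_lt_neg (h.isMin j hj)
  refine ⟨fun i hi => hs.pos_of_pos hγ0 h.isMax (h.pos i hi), fun i hi => ?_, hs.isMax hγ0 hγ1 hp h.isMax,
    fun j hj => ?_, (hs.apply_max_le hγ0 hp h.isMax).trans h.max_le_max₀, ?_⟩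
  · simpa using hs.neg.pos_of_pos hγ0 hm' (neg_pos.mpr (h.neg i hi))
  · simpa using hs.neg.isMax hγ0 hγ1 hp' hm' j hj
  · simpa using h.min₀_le_min.trans (neg_le_neg_iff.mp (hs.neg.apply_max_le hγ0 hp' hm'))

end Invariant

section RankOne

variable {d n : ℕ}

theorem mulVec_vecMulVec_self_dotProduct (v x y : Fin d → ℝ) :
    vecMulVec v v *ᵥ x ⬝ᵥ y = (v ⬝ᵥ x) * (v ⬝ᵥ y) := by
  rw [vecMulVec_mulVec, op_smul_eq_smul, smul_dotProduct, smul_eq_mul]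

theorem cluster_vecMulVec_self_of_pos {X : Fin n → Fin d → ℝ} {v : Fin d → ℝ} {i M : Fin n}
    (hi : 0 < v ⬝ᵥ X i) (hM : ∀ j ≠ M, v ⬝ᵥ X j < v ⬝ᵥ X M) :
    cluster X (vecMulVec v v) i = {M} := by
  ext j
  simp only [cluster, Finset.mem_filter, Finset.mem_univ, true_and, Finset.mem_singleton,
    mulVec_vecMulVec_self_dotProduct, mul_le_mul_iff_right₀ hi]
  refine ⟨fun hj => ?_, fun hj => hj ▸ le_of_forall_ne_lt hM⟩
  by_contra hne
  exact (hM j hne).not_ge (hj M)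

theorem cluster_vecMulVec_self_of_neg {X : Fin n → Fin d → ℝ} {v : Fin d → ℝ} {i m : Fin n}
    (hi : v ⬝ᵥ X i < 0) (hm : ∀ j ≠ m, v ⬝ᵥ X m < v ⬝ᵥ X j) :
    cluster X (vecMulVec v v) i = {m} := by
  rw [← neg_neg v, neg_vecMulVec, vecMulVec_neg, neg_neg]
  refine cluster_vecMulVec_self_of_pos (by simpa [neg_dotProduct] using hi) fun j hj => ?_
  simpa [neg_dotProduct] using hm j hj

theorem traj_succ_of_cluster_eq_singleton {γ : ℝ} {A : Matrix (Fin d) (Fin d) ℝ}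
    {X0 : Fin n → Fin d → ℝ} {k : ℕ} {i j : Fin n} (h : cluster (traj γ A X0 k) A i = {j}) :
    traj γ A X0 (k + 1) i = (1 - γ) • traj γ A X0 k i + γ • traj γ A X0 k j := by
  simp [traj, h]

theorem isProjectedStep_traj {γ : ℝ} {X0 : Fin n → Fin d → ℝ} {v : Fin d → ℝ} {M m : Fin n}
    {k : ℕ} (hM : ∀ j ≠ M, v ⬝ᵥ traj γ (vecMulVec v v) X0 k j < v ⬝ᵥ traj γ (vecMulVec v v) X0 k M)
    (hm : ∀ j ≠ m, v ⬝ᵥ traj γ (vecMulVec v v) X0 k m < v ⬝ᵥ traj γ (vecMulVec v v) X0 k j) :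
    IsProjectedStep γ M m (fun i => v ⬝ᵥ traj γ (vecMulVec v v) X0 k i)
      (fun i => v ⬝ᵥ traj γ (vecMulVec v v) X0 (k + 1) i) where
  of_pos i hi := by
    simp [traj_succ_of_cluster_eq_singleton (cluster_vecMulVec_self_of_pos hi hM)]
  of_neg i hi := by
    simp [traj_succ_of_cluster_eq_singleton (cluster_vecMulVec_self_of_neg hi hm)]

theorem projectionInvariant_traj {γ : ℝ} {X0 : Fin n → Fin d → ℝ} {v : Fin d → ℝ} {M m : Fin n}
    (hv : ∀ i, v ⬝ᵥ X0 i ≠ 0) (hM : ∀ j ≠ M, v ⬝ᵥ X0 j < v ⬝ᵥ X0 M)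
    (hm : ∀ j ≠ m, v ⬝ᵥ X0 m < v ⬝ᵥ X0 j) (hγ0 : 0 ≤ γ) (hγ1 : γ < 1) (k : ℕ) :
    ProjectionInvariant (fun i => v ⬝ᵥ X0 i)
      (fun i => v ⬝ᵥ traj γ (vecMulVec v v) X0 k i) M m := by
  induction k with
  | zero => exact .init hM hm
  | succ k ih => exact ih.step hv (isProjectedStep_traj ih.isMax ih.isMin) hγ0 hγ1

end RankOne

/-- **Invariants of rank-one hardmax self-attention dynamics** (`A = v vᵀ`, `γ ∈ (0,1)`):
for every step `k`, tokens with initially positive projection onto `v` keep a projection in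
`(0, ⟨v, x_M(0)⟩]` and their cluster set is `{M}`; symmetrically for negative projections. -/
theorem rank_one_invariants {d n : ℕ}
    (X0 : Fin n → (Fin d → ℝ)) (v : Fin d → ℝ)
    (hv : ∀ i, v ⬝ᵥ X0 i ≠ 0)
    (M m : Fin n)
    (hM : ∀ j, j ≠ M → v ⬝ᵥ X0 j < v ⬝ᵥ X0 M)
    (hm : ∀ j, j ≠ m → v ⬝ᵥ X0 m < v ⬝ᵥ X0 j)
    (γ : ℝ) (hγ0 : 0 < γ) (hγ1 : γ < 1) :
    ∀ k : ℕ, ∀ i,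
      (0 < v ⬝ᵥ X0 i →
        0 < v ⬝ᵥ traj γ (Matrix.vecMulVec v v) X0 k i ∧
        v ⬝ᵥ traj γ (Matrix.vecMulVec v v) X0 k i ≤ v ⬝ᵥ X0 M ∧
        cluster (traj γ (Matrix.vecMulVec v v) X0 k) (Matrix.vecMulVec v v) i = {M}) ∧
      (v ⬝ᵥ X0 i < 0 →
        v ⬝ᵥ X0 m ≤ v ⬝ᵥ traj γ (Matrix.vecMulVec v v) X0 k i ∧
        v ⬝ᵥ traj γ (Matrix.vecMulVec v v) X0 k i < 0 ∧
        cluster (traj γ (Matrix.vecMulVec v v) X0 k) (Matrix.vecMulVec v v) i = {m}) := by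
  intro k i
  have h := projectionInvariant_traj hv hM hm hγ0.le hγ1 k
  exact ⟨fun hi => ⟨h.pos i hi, h.le_max₀ i, cluster_vecMulVec_self_of_pos (h.pos i hi) h.isMax⟩,
    fun hi => ⟨h.min₀_le i, h.neg i hi, cluster_vecMulVec_self_of_neg (h.neg i hi) h.isMin⟩⟩
end

section
/- Let d, n ∈ ℕ, R > 0, ξ > 0, γ ∈ (0,1], and consider the hardmax self-attention dynamics with parameter matrix A = ξ I_d. Suppose the initial configuration x_1(0), …, x_n(0) ∈ ℝ^d is such that for a unique index i* ∈ {1,…,n}: x_{i*}(0) = R·1_d (the vector with all coordinates equal to R) and x_i(0) ∈ (0,R)^d for all i ≠ i*. Then for every i ∈ {1,…,n}, x_i(k) → x_{i*}(0) as k → ∞, i.e. the dynamics converge to the fully clustered equilibrium (x_{i*}(0), …, x_{i*}(0)). Moreover, for γ = 1 convergence takes place in one step: x_i(k) = x_{i*}(0) for all i and all k ≥ 1. -/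
open Filter Topology Matrix

lemma cluster_eq {d n : ℕ} (hd : 0 < d) (R ξ : ℝ) (hξ : 0 < ξ)
    (X : Fin n → (Fin d → ℝ)) (istar : Fin n)
    (hstar : X istar = fun _ => R)
    (hQ : ∀ j t, 0 < X j t ∧ X j t ≤ R) (i : Fin n) :
    cluster X (ξ • (1 : Matrix (Fin d) (Fin d) ℝ)) i
      = Finset.univ.filter (fun j => X j = fun _ => R) := by
  have hle : ∀ ℓ, X i ⬝ᵥ X ℓ ≤ X i ⬝ᵥ (fun _ => R) := by
    intro ℓ
    exact Finset.sum_le_sum fun t _ =>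
      mul_le_mul_of_nonneg_left (hQ ℓ t).2 (hQ i t).1.le
  have heq : ∀ ℓ, X i ⬝ᵥ X ℓ = X i ⬝ᵥ (fun _ => R) → X ℓ = fun _ => R := by
    intro ℓ h
    funext t
    have := (Finset.sum_eq_sum_iff_of_le
      (fun t _ => mul_le_mul_of_nonneg_left (hQ ℓ t).2 (hQ i t).1.le)).1 h t (Finset.mem_univ t)
    exact mul_left_cancel₀ (hQ i t).1.ne' this
  ext j
  simp only [cluster, Finset.mem_filter, Finset.mem_univ, true_and,
    Matrix.smul_mulVec, Matrix.one_mulVec, smul_dotProduct, smul_eq_mul]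
  constructor
  · intro h
    refine heq j (le_antisymm (hle j) ?_)
    have := h istar
    rw [hstar] at this
    exact le_of_mul_le_mul_left this hξ
  · intro hj ℓ
    have := hle ℓ
    rw [← hj] at this
    exact mul_le_mul_of_nonneg_left this hξ.le

lemma closed_form {d n : ℕ} (R ξ γ : ℝ) (hR : 0 < R) (hξ : 0 < ξ)
    (hγ0 : 0 < γ) (hγ1 : γ ≤ 1)
    (X0 : Fin n → (Fin d → ℝ)) (istar : Fin n)
    (hstar : X0 istar = fun _ => R)
    (hcube : ∀ i, i ≠ istar → ∀ t, 0 < X0 i t ∧ X0 i t < R) :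
    ∀ k i, traj γ (ξ • (1 : Matrix (Fin d) (Fin d) ℝ)) X0 k i
      = (1-γ)^k • X0 i + (1-(1-γ)^k) • (fun _ => R : Fin d → ℝ) := by
  rcases Nat.eq_zero_or_pos d with hd | hd
  · subst hd
    intro k i
    exact Subsingleton.elim _ _
  have hX0 : ∀ j t, 0 < X0 j t ∧ X0 j t ≤ R := by
    intro j t
    by_cases hj : j = istar
    · subst hj; rw [hstar]; exact ⟨hR, le_refl R⟩
    · exact ⟨(hcube j hj t).1, (hcube j hj t).2.le⟩
  intro k
  induction k with
  | zero => intro i; funext t; simp [traj]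
  | succ k ih =>
    set T := traj γ (ξ • (1 : Matrix (Fin d) (Fin d) ℝ)) X0 with hT
    set c := (1-γ)^k with hc
    have hc0 : 0 ≤ c := pow_nonneg (by linarith) k
    have hc1 : c ≤ 1 := pow_le_one₀ (by linarith) (by linarith)
    have hQ : ∀ j t, 0 < T k j t ∧ T k j t ≤ R := by
      intro j t
      rw [ih j]
      simp only [Pi.add_apply, Pi.smul_apply, smul_eq_mul]
      constructor
      · nlinarith [(hX0 j t).1, (hX0 j t).2]
      · nlinarith [(hX0 j t).1, (hX0 j t).2]
    have hks : T k istar = fun _ => R := by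
      rw [ih istar, hstar]; funext t
      simp only [Pi.add_apply, Pi.smul_apply, smul_eq_mul]; ring
    have hcl : ∀ i, cluster (T k) (ξ • (1 : Matrix (Fin d) (Fin d) ℝ)) i
        = Finset.univ.filter (fun j => T k j = fun _ => R) :=
      cluster_eq hd R ξ hξ (T k) istar hks hQ
    intro i
    have hmem : istar ∈ Finset.univ.filter (fun j => T k j = fun _ => R) := by
      simp [hks]
    set S := Finset.univ.filter (fun j => T k j = fun _ => R) with hS
    have hcard : (0:ℝ) < (S.card : ℝ) := by
      have := Finset.card_pos.2 ⟨istar, hmem⟩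
      exact_mod_cast this
    have hsum : ∑ ℓ ∈ S, T k ℓ = (S.card : ℝ) • (fun _ => R : Fin d → ℝ) := by
      rw [Finset.sum_congr rfl (fun j hj => (Finset.mem_filter.1 hj).2),
        Finset.sum_const, ← Nat.cast_smul_eq_nsmul ℝ]
    have hstep : T (k+1) i = (1-γ) • T k i + γ • (fun _ => R : Fin d → ℝ) := by
      show (1 - γ) • T k i + (γ / ((cluster (T k) _ i).card : ℝ)) •
          ∑ ℓ ∈ cluster (T k) _ i, T k ℓ = _
      rw [hcl i, hsum, smul_smul, div_mul_cancel₀ _ hcard.ne']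
    rw [hstep, ih i]
    funext t
    simp only [Pi.add_apply, Pi.smul_apply, smul_eq_mul, pow_succ]
    ring

/-- **Full clustering** for hardmax self-attention dynamics with `A = ξ I_d`:
if one token sits at the corner `R·1_d` of the hypercube `(0,R)^d` and all others lie inside
the hypercube, all tokens converge to the corner token; for `γ = 1` in one step. -/
theorem full_clustering {d n : ℕ} (R ξ γ : ℝ) (hR : 0 < R) (hξ : 0 < ξ)
    (hγ0 : 0 < γ) (hγ1 : γ ≤ 1)
    (X0 : Fin n → (Fin d → ℝ)) (istar : Fin n)
    (hstar : X0 istar = fun _ => R)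
    (hcube : ∀ i, i ≠ istar → ∀ t, 0 < X0 i t ∧ X0 i t < R) :
    (∀ i, Tendsto (fun k => traj γ (ξ • (1 : Matrix (Fin d) (Fin d) ℝ)) X0 k i)
        atTop (𝓝 (X0 istar))) ∧
    (γ = 1 → ∀ k, 1 ≤ k → ∀ i,
      traj γ (ξ • (1 : Matrix (Fin d) (Fin d) ℝ)) X0 k i = X0 istar) := by
  have hcf := closed_form R ξ γ hR hξ hγ0 hγ1 X0 istar hstar hcube
  constructor
  · intro i
    have h0 : Tendsto (fun k => (1-γ)^k) atTop (𝓝 0) := by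
      apply tendsto_pow_atTop_nhds_zero_of_abs_lt_one
      rw [abs_lt]; constructor <;> linarith
    have : Tendsto (fun k => (1-γ)^k • X0 i + (1-(1-γ)^k) • (fun _ => R : Fin d → ℝ))
        atTop (𝓝 ((0:ℝ) • X0 i + ((1:ℝ)-0) • (fun _ => R : Fin d → ℝ))) :=
      (h0.smul_const _).add ((tendsto_const_nhds.sub h0).smul_const _)
    simp only [zero_smul, zero_add, sub_zero, one_smul] at this
    rw [hstar]
    exact (tendsto_congr fun k => (hcf k i).symm).1 this
  · intro hγ k hk i
    rw [hcf k i, hstar]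
    have : (1-γ)^k = 0 := by
      rw [hγ]; simp [zero_pow (by omega : k ≠ 0)]
    rw [this]
    funext t; simp
end

section
/- Let d, n ∈ ℕ, R > 0, ξ > 0, γ ∈ (0,1), and consider the hardmax self-attention dynamics with parameter matrix A = ξ I_d. Suppose the initial configuration x_1(0), …, x_n(0) ∈ ℝ^d is such that for a unique index i* ∈ {1,…,n}: x_{i*}(0) = R·1_d (the vector with all coordinates equal to R) and x_i(0) ∈ (0,R)^d for all i ≠ i*. Then for every i ∈ {1,…,n} and every k ≥ 0, ‖x_i(k) − x_{i*}(0)‖ ≤ (1−γ)^k ‖x_i(0) − x_{i*}(0)‖, where ‖·‖ is the Euclidean norm. -/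
open Filter Topology Matrix

/-- Euclidean norm on `ℝ^d` (viewed as `Fin d → ℝ`). -/
noncomputable def enorm {d : ℕ} (x : Fin d → ℝ) : ℝ :=
  Real.sqrt (∑ t, x t ^ 2)

/-!
With `A = ξ I`, the score of token `j` seen from a token `x_i` with positive coordinates is
`ξ ⟨x_i, x_j⟩`, which is maximised uniquely by the corner `R·1` as long as every other token
lies in the open cube `(0, R)^d`. Each step is then the homothety `x ↦ (1-γ) x + γ R·1` of
ratio `1 - γ ∈ (0, 1)` centred at the corner, which maps the cube into itself; hence
`x_i(k) - R·1 = (1-γ)^k (x_i(0) - R·1)` for all `k`.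
-/

def IsCornerConfig {d n : ℕ} (R : ℝ) (istar : Fin n) (X : Fin n → Fin d → ℝ) : Prop :=
  X istar = (fun _ => R) ∧ ∀ j, j ≠ istar → ∀ t, 0 < X j t ∧ X j t < R

lemma enorm_smul_eq_abs_mul {d : ℕ} (c : ℝ) (x : Fin d → ℝ) :
    _root_.enorm (c • x) = |c| * _root_.enorm x := by
  unfold _root_.enorm
  rw [← Real.sqrt_sq_eq_abs, ← Real.sqrt_mul (sq_nonneg c), Finset.mul_sum]
  simp only [Pi.smul_apply, smul_eq_mul, mul_pow]

lemma smul_one_mulVec_dotProduct {m : Type*} [Fintype m] [DecidableEq m] {S : Type*}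
    [CommSemiring S] (ξ : S) (x y : m → S) :
    (ξ • (1 : Matrix m m S)) *ᵥ x ⬝ᵥ y = ξ * (x ⬝ᵥ y) := by
  rw [smul_mulVec, one_mulVec, smul_dotProduct, smul_eq_mul]

lemma cluster_eq_singleton_of_forall_lt {d n : ℕ} (X : Fin n → Fin d → ℝ)
    (A : Matrix (Fin d) (Fin d) ℝ) (i j₀ : Fin n)
    (h : ∀ j, j ≠ j₀ → A *ᵥ X i ⬝ᵥ X j < A *ᵥ X i ⬝ᵥ X j₀) :
    cluster X A i = {j₀} := by
  ext j
  simp only [cluster, Finset.mem_filter, Finset.mem_univ, true_and, Finset.mem_singleton]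
  constructor
  · intro hmax
    by_contra hj
    exact (h j hj).not_ge (hmax j₀)
  · rintro rfl ℓ
    rcases eq_or_ne ℓ j with rfl | hℓ
    · exact le_rfl
    · exact (h ℓ hℓ).le

namespace IsCornerConfig

variable {d n : ℕ} {R : ℝ} {istar : Fin n} {X : Fin n → Fin d → ℝ}

lemma pos (hR : 0 < R) (hX : IsCornerConfig R istar X) (i : Fin n) (t : Fin d) :
    0 < X i t := by
  rcases eq_or_ne i istar with rfl | hi
  · rw [hX.1]
    exact hR
  · exact (hX.2 i hi t).1

lemma cluster_eq_singleton [Nonempty (Fin d)] {ξ : ℝ} (hR : 0 < R) (hξ : 0 < ξ)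
    (hX : IsCornerConfig R istar X) (i : Fin n) :
    cluster X (ξ • (1 : Matrix (Fin d) (Fin d) ℝ)) i = {istar} := by
  refine cluster_eq_singleton_of_forall_lt X _ i istar fun j hj => ?_
  rw [smul_one_mulVec_dotProduct, smul_one_mulVec_dotProduct, hX.1]
  refine mul_lt_mul_of_pos_left (Finset.sum_lt_sum_of_nonempty Finset.univ_nonempty
    fun t _ => ?_) hξ
  exact mul_lt_mul_of_pos_left (hX.2 j hj t).2 (hX.pos hR i t)

lemma homothety (hX : IsCornerConfig R istar X) {s : ℝ} (hs0 : 0 < s) (hs1 : s ≤ 1) :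
    IsCornerConfig R istar (fun j => X istar + s • (X j - X istar)) := by
  refine ⟨by simpa using hX.1, fun j hj t => ?_⟩
  have hjt := hX.2 j hj t
  simp only [Pi.add_apply, Pi.smul_apply, Pi.sub_apply, smul_eq_mul, hX.1]
  constructor <;> nlinarith

end IsCornerConfig

variable {d n : ℕ} {R ξ γ : ℝ} {istar : Fin n} {X0 : Fin n → Fin d → ℝ}

lemma traj_succ_of_isCornerConfig (hR : 0 < R) (hξ : 0 < ξ) {k : ℕ}
    (hX : IsCornerConfig R istar (traj γ (ξ • (1 : Matrix (Fin d) (Fin d) ℝ)) X0 k))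
    (j : Fin n) :
    traj γ (ξ • (1 : Matrix (Fin d) (Fin d) ℝ)) X0 (k + 1) j =
      (1 - γ) • traj γ (ξ • 1) X0 k j + γ • traj γ (ξ • 1) X0 k istar := by
  rcases isEmpty_or_nonempty (Fin d) with hd | hd
  · exact Subsingleton.elim _ _
  · simp only [traj, hX.cluster_eq_singleton hR hξ j, Finset.card_singleton, Nat.cast_one,
      div_one, Finset.sum_singleton]

theorem traj_eq_homothety (hR : 0 < R) (hξ : 0 < ξ) (hγ0 : 0 < γ) (hγ1 : γ < 1)
    (hX0 : IsCornerConfig R istar X0) (k : ℕ) :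
    traj γ (ξ • (1 : Matrix (Fin d) (Fin d) ℝ)) X0 k =
      fun j => X0 istar + (1 - γ) ^ k • (X0 j - X0 istar) := by
  induction k with
  | zero => simp [traj]
  | succ k ih =>
    have hk := ih ▸ hX0.homothety (pow_pos (sub_pos.2 hγ1) k)
      (pow_le_one₀ (sub_nonneg.2 hγ1.le) (by linarith))
    funext j
    rw [traj_succ_of_isCornerConfig hR hξ hk, ih]
    module

/-- **Quantitative full clustering** for hardmax self-attention dynamics with `A = ξ I_d`
and `γ ∈ (0,1)`: every token approaches the corner token geometrically,
`‖x_i(k) − x_{i*}(0)‖ ≤ (1−γ)^k ‖x_i(0) − x_{i*}(0)‖`. -/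
theorem full_clustering_rate {d n : ℕ} (R ξ γ : ℝ) (hR : 0 < R) (hξ : 0 < ξ)
    (hγ0 : 0 < γ) (hγ1 : γ < 1)
    (X0 : Fin n → (Fin d → ℝ)) (istar : Fin n)
    (hstar : X0 istar = fun _ => R)
    (hcube : ∀ i, i ≠ istar → ∀ t, 0 < X0 i t ∧ X0 i t < R) :
    ∀ i, ∀ k : ℕ,
      _root_.enorm (traj γ (ξ • (1 : Matrix (Fin d) (Fin d) ℝ)) X0 k i - X0 istar) ≤
        (1 - γ) ^ k * _root_.enorm (X0 i - X0 istar) := by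
  intro i k
  rw [traj_eq_homothety hR hξ hγ0 hγ1 ⟨hstar, hcube⟩ k, add_sub_cancel_left,
    enorm_smul_eq_abs_mul, abs_of_nonneg (pow_nonneg (sub_nonneg.2 hγ1.le) k)]
end

section
/- Let d, n ∈ ℕ, R > 0, ξ > 0, γ ∈ (0,1], and consider the hardmax self-attention dynamics with parameter matrix A = ξ I_d. Suppose the initial configuration x_1(0), …, x_n(0) ∈ ℝ^d consists of pairwise distinct vectors all lying on the hypersphere S_R = { x ∈ ℝ^d : ‖x‖ = R } (Euclidean norm). Then the initial configuration is an equilibrium: x_i(k) = x_i(0) for every i ∈ {1,…,n} and every k ≥ 0. -/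
/-
With `A = ξ I` and `ξ > 0`, token `i` attends to the tokens maximising `⟨x_i, x_j⟩`. On a sphere of
radius `R`, `⟨x_i, x_j⟩ = R² - ‖x_i - x_j‖² / 2`, so for pairwise distinct tokens the maximum is
attained only at `j = i`. Every cluster is then a singleton `{i}`, and the update
`x_i ↦ (1 - γ) x_i + γ x_i` fixes every token.
-/

open Filter Topology Matrix

/-- Euclidean norm on `ℝ^d` (viewed as `Fin d → ℝ`). -/
noncomputable def euclNorm {d : ℕ} (x : Fin d → ℝ) : ℝ :=
  Real.sqrt (∑ t, x t ^ 2)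

theorem euclNorm_sq {d : ℕ} (x : Fin d → ℝ) : euclNorm x ^ 2 = x ⬝ᵥ x := by
  rw [euclNorm, Real.sq_sqrt (Finset.sum_nonneg fun t _ => sq_nonneg (x t))]
  exact Finset.sum_congr rfl fun t _ => sq (x t)

theorem dotProduct_lt_of_ne_of_dotProduct_self_eq {ι R : Type*} [Fintype ι] [CommRing R]
    [LinearOrder R] [IsStrictOrderedRing R] {x y : ι → R} {r : R} (hxy : x ≠ y)
    (hx : x ⬝ᵥ x = r) (hy : y ⬝ᵥ y = r) : x ⬝ᵥ y < r := by
  have hpos : 0 < (x - y) ⬝ᵥ (x - y) :=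
    lt_of_le_of_ne (Finset.sum_nonneg fun t _ => mul_self_nonneg _)
      (Ne.symm (dotProduct_self_eq_zero.not.mpr (sub_ne_zero.mpr hxy)))
  rw [sub_dotProduct, dotProduct_sub, dotProduct_sub, dotProduct_comm y x, hx, hy] at hpos
  linarith

theorem cluster_eq_singleton {d n : ℕ} {X : Fin n → (Fin d → ℝ)}
    {A : Matrix (Fin d) (Fin d) ℝ} {i : Fin n}
    (hmax : ∀ j, j ≠ i → A *ᵥ X i ⬝ᵥ X j < A *ᵥ X i ⬝ᵥ X i) :
    cluster X A i = {i} := by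
  ext j
  simp only [cluster, Finset.mem_filter, Finset.mem_univ, true_and, Finset.mem_singleton]
  constructor
  · intro hj
    by_contra hji
    exact (hmax j hji).not_ge (hj i)
  · rintro rfl ℓ
    rcases eq_or_ne ℓ j with rfl | hℓ
    · exact le_rfl
    · exact (hmax ℓ hℓ).le

theorem traj_eq_of_cluster_eq_singleton {d n : ℕ} (γ : ℝ) {A : Matrix (Fin d) (Fin d) ℝ}
    {X0 : Fin n → (Fin d → ℝ)} (hcl : ∀ i, cluster X0 A i = {i}) :
    ∀ k, traj γ A X0 k = X0
  | 0 => rfl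
  | k + 1 => by
    funext i
    rw [traj, traj_eq_of_cluster_eq_singleton γ hcl k]
    beta_reduce
    rw [hcl i, Finset.card_singleton, Finset.sum_singleton, Nat.cast_one, div_one, ← add_smul,
      sub_add_cancel, one_smul]

theorem no_clustering_general {d n : ℕ} (R ξ γ : ℝ) (hξ : 0 < ξ)
    (X0 : Fin n → (Fin d → ℝ))
    (hinj : Function.Injective X0)
    (hsphere : ∀ i, euclNorm (X0 i) = R) :
    ∀ k : ℕ, ∀ i, traj γ (ξ • (1 : Matrix (Fin d) (Fin d) ℝ)) X0 k i = X0 i := by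
  have hself : ∀ i, X0 i ⬝ᵥ X0 i = R ^ 2 := fun i => by rw [← euclNorm_sq, hsphere i]
  have hmax : ∀ i j, j ≠ i → (ξ • (1 : Matrix (Fin d) (Fin d) ℝ)) *ᵥ X0 i ⬝ᵥ X0 j
      < (ξ • (1 : Matrix (Fin d) (Fin d) ℝ)) *ᵥ X0 i ⬝ᵥ X0 i := fun i j hji => by
    simp only [smul_mulVec, one_mulVec, smul_dotProduct, smul_eq_mul]
    rw [hself i]
    exact mul_lt_mul_of_pos_left
      (dotProduct_lt_of_ne_of_dotProduct_self_eq (hinj.ne hji.symm) (hself i) (hself j)) hξ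
  intro k i
  rw [traj_eq_of_cluster_eq_singleton γ (fun i => cluster_eq_singleton (hmax i)) k]

/-- **No clustering** for hardmax self-attention dynamics with `A = ξ I_d`:
any configuration of pairwise distinct tokens on the hypersphere of radius `R`
is an equilibrium of the dynamics. -/
theorem no_clustering {d n : ℕ} (R ξ γ : ℝ) (hR : 0 < R) (hξ : 0 < ξ)
    (hγ0 : 0 < γ) (hγ1 : γ ≤ 1)
    (X0 : Fin n → (Fin d → ℝ))
    (hinj : Function.Injective X0)
    (hsphere : ∀ i, euclNorm (X0 i) = R) :
    ∀ k : ℕ, ∀ i, traj γ (ξ • (1 : Matrix (Fin d) (Fin d) ℝ)) X0 k i = X0 i :=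
  no_clustering_general R ξ γ hξ X0 hinj hsphere
end

section
/- Let d, n ∈ ℕ, R > 0, ξ > 0, γ ∈ (0,1], and consider the hardmax self-attention dynamics with parameter matrix A = ξ I_d. Suppose the initial configuration x_1(0), …, x_n(0) ∈ ℝ^d consists of pairwise distinct vectors and there is a subset of indices I = {i¹, …, i^m} ⊆ {1,…,n} with |I| = m such that: (i) x_i(0) ∈ (0,R)^d for all i ∉ I; (ii) x_{i¹}(0) = R·1_d (the vector with all coordinates equal to R); and (iii) x_{iʲ}(0) lies on the hypersphere { x : ‖x‖ = R } and has all coordinates strictly negative, for all j ∈ {2,…,m}. Then for every i ∉ I, x_i(k) → x_{i¹}(0) as k → ∞, while x_{iʲ}(k) = x_{iʲ}(0) for all j ∈ {1,…,m} and all k ≥ 0; that is, the dynamics converge to a partially clustered state with exactly m distinct tokens, consisting of n − m + 1 copies of x_{i¹}(0) together with x_{i²}(0), …, x_{i^m}(0). For γ = 1 convergence takes place in one step. -/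
open Filter Topology Matrix

/-! With `A = ξ I_d` the hardmax score `⟨A x_i, x_j⟩` orders tokens like the plain dot
product. Every token stays in `(-∞, R]^d`, so for a token with positive coordinates the dot
product is maximised exactly at the corner `R·1_d`; a leader on the sphere with negative
coordinates has a larger dot product with itself than with any other position (strict
Cauchy–Schwarz against the other leaders, a nonpositive dot product against everything else). Hence the leaders are fixed points and
every other token satisfies `x(k+1) - R·1_d = (1-γ) (x(k) - R·1_d)`, which stays in the box
`(0, R]^d` and tends to `R·1_d`. -/

section DotProduct

variable {σ : Type*} [Fintype σ]

theorem dotProduct_lt_dotProduct_const {v w : σ → ℝ} {R : ℝ} (hv : ∀ t, 0 < v t)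
    (hw : ∀ t, w t ≤ R) (hne : w ≠ fun _ => R) : v ⬝ᵥ w < v ⬝ᵥ fun _ => R := by
  obtain ⟨t₀, ht₀⟩ : ∃ t₀, w t₀ ≠ R := by
    by_contra! h
    exact hne (funext h)
  exact Finset.sum_lt_sum (fun t _ => mul_le_mul_of_nonneg_left (hw t) (hv t).le)
    ⟨t₀, Finset.mem_univ _, mul_lt_mul_of_pos_left ((hw t₀).lt_of_ne ht₀) (hv t₀)⟩

theorem dotProduct_nonpos_of_nonpos_of_nonneg {v w : σ → ℝ} (hv : ∀ t, v t ≤ 0)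
    (hw : ∀ t, 0 ≤ w t) : v ⬝ᵥ w ≤ 0 :=
  Finset.sum_nonpos fun t _ => mul_nonpos_of_nonpos_of_nonneg (hv t) (hw t)

theorem dotProduct_lt_of_dotProduct_self_eq {x y : σ → ℝ} {r : ℝ} (hx : x ⬝ᵥ x = r)
    (hy : y ⬝ᵥ y = r) (hne : x ≠ y) : x ⬝ᵥ y < r := by
  have hpos : 0 < (x - y) ⬝ᵥ (x - y) :=
    (Finset.sum_nonneg fun t _ => mul_self_nonneg _).lt_of_ne
      (Ne.symm (mt dotProduct_self_eq_zero.1 (sub_ne_zero.2 hne)))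
  rw [sub_dotProduct, dotProduct_sub, dotProduct_sub, dotProduct_comm y x, hx, hy] at hpos
  linarith

theorem dotProduct_self_eq_sq_of_enorm_eq {d : ℕ} {x : Fin d → ℝ} {R : ℝ}
    (h : _root_.enorm x = R) : x ⬝ᵥ x = R ^ 2 := by
  rw [← h, _root_.enorm, Real.sq_sqrt (Finset.sum_nonneg fun t _ => sq_nonneg (x t))]
  simp only [dotProduct, pow_two]

end DotProduct

section Cluster

variable {d n : ℕ} (X : Fin n → Fin d → ℝ)

theorem cluster_nonempty (A : Matrix (Fin d) (Fin d) ℝ) (i : Fin n) :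
    (cluster X A i).Nonempty := by
  obtain ⟨j, -, hj⟩ := Finset.exists_max_image Finset.univ (fun j => A *ᵥ X i ⬝ᵥ X j)
    ⟨i, Finset.mem_univ i⟩
  exact ⟨j, Finset.mem_filter.2 ⟨Finset.mem_univ j, fun ℓ => hj ℓ (Finset.mem_univ ℓ)⟩⟩

theorem mem_cluster_smul_one {ξ : ℝ} (hξ : 0 < ξ) {i j : Fin n} :
    j ∈ cluster X (ξ • 1) i ↔ ∀ ℓ, X i ⬝ᵥ X ℓ ≤ X i ⬝ᵥ X j := by
  simp only [cluster, Finset.mem_filter, Finset.mem_univ, true_and, smul_mulVec, one_mulVec,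
    smul_dotProduct, smul_eq_mul, mul_le_mul_iff_right₀ hξ]

variable {ξ : ℝ} (hξ : 0 < ξ) {i j : Fin n}
include hξ

theorem eq_of_mem_cluster_smul_one {c : Fin n} {p : Fin d → ℝ} (hc : X c = p)
    (hlt : ∀ ℓ, X ℓ ≠ p → X i ⬝ᵥ X ℓ < X i ⬝ᵥ p) (hj : j ∈ cluster X (ξ • 1) i) :
    X j = p := by
  by_contra hne
  exact (hlt j hne).not_ge (hc ▸ (mem_cluster_smul_one X hξ).1 hj c)

theorem eq_const_of_mem_cluster_smul_one {c : Fin n} {R : ℝ} (hle : ∀ ℓ t, X ℓ t ≤ R)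
    (hc : X c = fun _ => R) (hi : ∀ t, 0 < X i t) (hj : j ∈ cluster X (ξ • 1) i) :
    X j = fun _ => R :=
  eq_of_mem_cluster_smul_one X hξ hc
    (fun ℓ hℓ => dotProduct_lt_dotProduct_const hi (hle ℓ) hℓ) hj

theorem eq_self_of_mem_cluster_smul_one (hi : 0 < X i ⬝ᵥ X i)
    (hX : ∀ ℓ, X i ⬝ᵥ X ℓ ≤ 0 ∨ X ℓ ⬝ᵥ X ℓ = X i ⬝ᵥ X i) (hj : j ∈ cluster X (ξ • 1) i) :
    X j = X i :=
  eq_of_mem_cluster_smul_one X hξ rfl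
    (fun ℓ hℓ => (hX ℓ).elim (fun h => h.trans_lt hi)
      fun h => dotProduct_lt_of_dotProduct_self_eq rfl h (Ne.symm hℓ)) hj

end Cluster

theorem traj_succ_of_forall_mem_cluster {d n : ℕ} {γ : ℝ} {A : Matrix (Fin d) (Fin d) ℝ}
    {X0 : Fin n → Fin d → ℝ} {k : ℕ} {i : Fin n} {p : Fin d → ℝ}
    (h : ∀ ℓ ∈ cluster (traj γ A X0 k) A i, traj γ A X0 k ℓ = p) :
    traj γ A X0 (k + 1) i = (1 - γ) • traj γ A X0 k i + γ • p := by
  have hcard : ((cluster (traj γ A X0 k) A i).card : ℝ) ≠ 0 :=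
    Nat.cast_ne_zero.2 (cluster_nonempty _ A i).card_ne_zero
  rw [traj]
  dsimp only
  rw [Finset.sum_congr rfl h, Finset.sum_const, ← Nat.cast_smul_eq_nsmul ℝ, smul_smul,
    div_mul_cancel₀ _ hcard]

section PartialClustering

variable {d n m : ℕ} {R ξ γ : ℝ} {X0 : Fin n → Fin d → ℝ} {ι : Fin m → Fin n}

theorem traj_succ_of_leaders_fixed (hR : 0 < R) (hξ : 0 < ξ) (hm : 0 < m)
    (hcorner : X0 (ι ⟨0, hm⟩) = fun _ => R)
    (hsphere : ∀ j : Fin m, j ≠ ⟨0, hm⟩ → X0 (ι j) ⬝ᵥ X0 (ι j) = R ^ 2 ∧ ∀ t, X0 (ι j) t < 0)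
    {k : ℕ} (hlead : ∀ j, traj γ (ξ • 1) X0 k (ι j) = X0 (ι j))
    (hbox : ∀ i ∉ Set.range ι, ∀ t, 0 < traj γ (ξ • 1) X0 k i t ∧ traj γ (ξ • 1) X0 k i t ≤ R) :
    (∀ j, traj γ (ξ • 1) X0 (k + 1) (ι j) = X0 (ι j)) ∧
      ∀ i ∉ Set.range ι,
        traj γ (ξ • 1) X0 (k + 1) i = (1 - γ) • traj γ (ξ • 1) X0 k i + γ • fun _ => R := by
  set X := traj γ (ξ • 1) X0 k
  have hclass : ∀ ℓ, (∀ t, 0 < X ℓ t ∧ X ℓ t ≤ R) ∨ (X ℓ ⬝ᵥ X ℓ = R ^ 2 ∧ ∀ t, X ℓ t < 0) := by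
    intro ℓ
    by_cases hℓ : ℓ ∈ Set.range ι
    · obtain ⟨j, rfl⟩ := hℓ
      rw [hlead j]
      by_cases hj : j = ⟨0, hm⟩
      · subst hj
        exact Or.inl fun _ => hcorner ▸ ⟨hR, le_rfl⟩
      · exact Or.inr (hsphere j hj)
    · exact Or.inl (hbox ℓ hℓ)
  have hle : ∀ ℓ t, X ℓ t ≤ R := fun ℓ t =>
    (hclass ℓ).elim (fun h => (h t).2) fun h => ((h.2 t).trans hR).le
  have hc : X (ι ⟨0, hm⟩) = fun _ => R := (hlead _).trans hcorner
  have to_corner : ∀ i, (∀ t, 0 < X i t) →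
      traj γ (ξ • 1) X0 (k + 1) i = (1 - γ) • X i + γ • fun _ => R := fun i hi =>
    traj_succ_of_forall_mem_cluster fun ℓ hℓ =>
      eq_const_of_mem_cluster_smul_one X hξ hle hc hi hℓ
  refine ⟨fun j => ?_, fun i hi => to_corner i fun t => (hbox i hi t).1⟩
  by_cases hj : j = ⟨0, hm⟩
  · subst hj
    rw [to_corner _ (hc ▸ fun _ => hR), hc, hcorner]
    module
  · obtain ⟨hsq, hneg⟩ := hsphere j hj
    rw [← hlead j] at hsq hneg
    have hX : ∀ ℓ, X (ι j) ⬝ᵥ X ℓ ≤ 0 ∨ X ℓ ⬝ᵥ X ℓ = X (ι j) ⬝ᵥ X (ι j) := fun ℓ =>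
      (hclass ℓ).imp
        (fun h => dotProduct_nonpos_of_nonpos_of_nonneg (fun t => (hneg t).le) fun t => (h t).1.le)
        fun h => h.1.trans hsq.symm
    have hfix : traj γ (ξ • 1) X0 (k + 1) (ι j) = (1 - γ) • X (ι j) + γ • X (ι j) :=
      traj_succ_of_forall_mem_cluster fun ℓ hℓ =>
        eq_self_of_mem_cluster_smul_one X hξ (hsq ▸ by positivity) hX hℓ
    rw [hfix, hlead j]
    module

theorem traj_leaders_fixed_and_followers_eq (hR : 0 < R) (hξ : 0 < ξ) (hγ0 : 0 ≤ γ)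
    (hγ1 : γ ≤ 1) (hm : 0 < m) (hcube : ∀ i ∉ Set.range ι, ∀ t, 0 < X0 i t ∧ X0 i t < R)
    (hcorner : X0 (ι ⟨0, hm⟩) = fun _ => R)
    (hsphere : ∀ j : Fin m, j ≠ ⟨0, hm⟩ → X0 (ι j) ⬝ᵥ X0 (ι j) = R ^ 2 ∧ ∀ t, X0 (ι j) t < 0)
    (k : ℕ) :
    (∀ j, traj γ (ξ • 1) X0 k (ι j) = X0 (ι j)) ∧
      ∀ i ∉ Set.range ι,
        traj γ (ξ • 1) X0 k i = (fun _ => R) + (1 - γ) ^ k • (X0 i - fun _ => R) := by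
  induction k with
  | zero => exact ⟨fun _ => rfl, fun i _ => by rw [pow_zero, one_smul, add_sub_cancel]; rfl⟩
  | succ k ih =>
    obtain ⟨hlead, hfollow⟩ := ih
    have hbox : ∀ i ∉ Set.range ι, ∀ t,
        0 < traj γ (ξ • 1) X0 k i t ∧ traj γ (ξ • 1) X0 k i t ≤ R := by
      intro i hi t
      have ha0 : 0 ≤ (1 - γ) ^ k := pow_nonneg (by linarith) k
      have ha1 : (1 - γ) ^ k ≤ 1 := pow_le_one₀ (by linarith) (by linarith)
      obtain ⟨hx0, hxR⟩ := hcube i hi t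
      rw [hfollow i hi]
      simp only [Pi.add_apply, Pi.smul_apply, Pi.sub_apply, smul_eq_mul]
      constructor <;> nlinarith
    obtain ⟨hlead', hstep⟩ := traj_succ_of_leaders_fixed hR hξ hm hcorner hsphere hlead hbox
    refine ⟨hlead', fun i hi => ?_⟩
    rw [hstep i hi, hfollow i hi, pow_succ]
    module

end PartialClustering

theorem partial_clustering_general {d n m : ℕ} (R ξ γ : ℝ) (hR : 0 < R) (hξ : 0 < ξ)
    (hγ0 : 0 < γ) (hγ1 : γ ≤ 1) (hm : 0 < m)
    (X0 : Fin n → (Fin d → ℝ))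
    (ι : Fin m → Fin n)
    (hcube : ∀ i, i ∉ Set.range ι → ∀ t, 0 < X0 i t ∧ X0 i t < R)
    (hcorner : X0 (ι ⟨0, hm⟩) = fun _ => R)
    (hsphere : ∀ j : Fin m, j ≠ ⟨0, hm⟩ →
      _root_.enorm (X0 (ι j)) = R ∧ ∀ t, X0 (ι j) t < 0) :
    (∀ i, i ∉ Set.range ι →
      Tendsto (fun k => traj γ (ξ • (1 : Matrix (Fin d) (Fin d) ℝ)) X0 k i)
        atTop (𝓝 (X0 (ι ⟨0, hm⟩)))) ∧
    (∀ j : Fin m, ∀ k : ℕ,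
      traj γ (ξ • (1 : Matrix (Fin d) (Fin d) ℝ)) X0 k (ι j) = X0 (ι j)) ∧
    (γ = 1 → ∀ i, i ∉ Set.range ι → ∀ k, 1 ≤ k →
      traj γ (ξ • (1 : Matrix (Fin d) (Fin d) ℝ)) X0 k i = X0 (ι ⟨0, hm⟩)) := by
  have key := traj_leaders_fixed_and_followers_eq hR hξ hγ0.le hγ1 hm hcube hcorner
    fun j hj => ⟨dotProduct_self_eq_sq_of_enorm_eq (hsphere j hj).1, (hsphere j hj).2⟩
  refine ⟨fun i hi => ?_, fun j k => (key k).1 j, ?_⟩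
  · have h := ((tendsto_pow_atTop_nhds_zero_of_lt_one (r := 1 - γ) (by linarith) (by linarith)).smul_const
      (X0 i - fun _ => R)).const_add (fun _ => R)
    rw [zero_smul, add_zero] at h
    rw [hcorner]
    exact h.congr fun k => ((key k).2 i hi).symm
  · rintro rfl i hi k hk
    rw [(key k).2 i hi, hcorner, sub_self, zero_pow (by omega), zero_smul, add_zero]

/-- **Partial clustering** for hardmax self-attention dynamics with `A = ξ I_d`:
given a set of `m` leaders `ι 0, …, ι (m−1)` — one at the corner `R·1_d` of the hypercube
`(0,R)^d`, the rest on the radius-`R` hypersphere with all coordinates negative — while all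
remaining tokens lie inside the hypercube, the leaders stay fixed and every other token
converges to the corner leader; for `γ = 1` in one step. -/
theorem partial_clustering {d n m : ℕ} (R ξ γ : ℝ) (hR : 0 < R) (hξ : 0 < ξ)
    (hγ0 : 0 < γ) (hγ1 : γ ≤ 1) (hm : 0 < m)
    (X0 : Fin n → (Fin d → ℝ)) (hinj : Function.Injective X0)
    (ι : Fin m → Fin n) (hι : Function.Injective ι)
    (hcube : ∀ i, i ∉ Set.range ι → ∀ t, 0 < X0 i t ∧ X0 i t < R)
    (hcorner : X0 (ι ⟨0, hm⟩) = fun _ => R)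
    (hsphere : ∀ j : Fin m, j ≠ ⟨0, hm⟩ →
      _root_.enorm (X0 (ι j)) = R ∧ ∀ t, X0 (ι j) t < 0) :
    (∀ i, i ∉ Set.range ι →
      Tendsto (fun k => traj γ (ξ • (1 : Matrix (Fin d) (Fin d) ℝ)) X0 k i)
        atTop (𝓝 (X0 (ι ⟨0, hm⟩)))) ∧
    (∀ j : Fin m, ∀ k : ℕ,
      traj γ (ξ • (1 : Matrix (Fin d) (Fin d) ℝ)) X0 k (ι j) = X0 (ι j)) ∧
    (γ = 1 → ∀ i, i ∉ Set.range ι → ∀ k, 1 ≤ k →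
      traj γ (ξ • (1 : Matrix (Fin d) (Fin d) ℝ)) X0 k i = X0 (ι ⟨0, hm⟩)) :=
  partial_clustering_general R ξ γ hR hξ hγ0 hγ1 hm X0 ι hcube hcorner hsphere
end

section
/- Fix pairwise distinct points x_1, …, x_m ∈ ℝ^d, an index i ∈ {1,…,m}, and a point y ∈ ℝ^d. Then there exist parameters η ∈ ℝ, W ∈ ℝ^{d×3}, U ∈ ℝ^{3×d}, b ∈ ℝ^3 of a feed-forward layer FF of width d' = 3 such that FF(x_i) = y and FF(x_j) = x_j for all j ≠ i. -/
open Matrix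

/-!
Pick a linear functional `a` that is injective on the points, so the numbers `a ⬝ᵥ x j` are
distinct, and a `δ > 0` below every gap `|a ⬝ᵥ x j - a ⬝ᵥ x i|`. Three ReLU neurons reading
`s = a ⬝ᵥ x - a ⬝ᵥ x i` combine to the hat `σ(s + δ) - 2σ(s) + σ(s - δ)`, which is `δ` at `x i`
and `0` at every other `x j`; with `η = 1` and the rank-one `W` sending the hat to
`δ⁻¹ • (y - x i)`, the layer moves `x i` to `y` and fixes the other points.
-/

/-- Feed-forward layer of width `d'`: `FF(x) = η x + W σ(U x + b)` with componentwise ReLU. -/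
noncomputable def FF {d d' : ℕ} (η : ℝ) (W : Matrix (Fin d) (Fin d') ℝ)
    (U : Matrix (Fin d') (Fin d) ℝ) (b : Fin d' → ℝ) (x : Fin d → ℝ) : Fin d → ℝ :=
  η • x + W.mulVec fun k => max 0 (U.mulVec x k + b k)

lemma exists_dotProduct_injective {ι : Type*} [Finite ι] {n : Type*} [Fintype n]
    {x : ι → n → ℝ} (hx : Function.Injective x) :
    ∃ a : n → ℝ, Function.Injective fun j => a ⬝ᵥ x j := by
  classical
  obtain ⟨f, hf⟩ := Module.exists_dual_forall_apply_ne_zero (K := ℝ)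
    (fun p : {p : ι × ι // p.1 ≠ p.2} => x p.1.1 - x p.1.2)
    fun p => sub_ne_zero.mpr (hx.ne p.2)
  set a : n → ℝ := fun q => f fun r => if q = r then 1 else 0
  have hfa (z : n → ℝ) : f z = a ⬝ᵥ z := by
    rw [LinearMap.pi_apply_eq_sum_univ f z, dotProduct]
    exact Finset.sum_congr rfl fun q _ => mul_comm _ _
  refine ⟨a, fun j k hjk => by_contra fun hne => hf ⟨(j, k), hne⟩ ?_⟩
  change f (x j - x k) = 0
  rw [hfa, dotProduct_sub]
  exact sub_eq_zero.mpr hjk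

lemma exists_pos_le_dist_of_injective {X ι : Type*} [MetricSpace X] [Finite ι] {t : ι → X}
    (ht : Function.Injective t) (i : ι) : ∃ δ > 0, ∀ j ≠ i, δ ≤ dist (t j) (t i) := by
  have hclosed : IsClosed (t '' {i}ᶜ) := (Set.toFinite _).isClosed
  have hi : t i ∉ t '' {i}ᶜ := fun ⟨j, hj, hji⟩ => hj (ht hji)
  obtain ⟨δ, hδ, hball⟩ := Metric.isOpen_iff.mp hclosed.isOpen_compl (t i) hi
  exact ⟨δ, hδ, fun j hj => not_lt.mp fun h => hball (Metric.mem_ball.mpr h) ⟨j, hj, rfl⟩⟩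

def hat (δ s : ℝ) : ℝ := max 0 (s + δ) - 2 * max 0 s + max 0 (s - δ)

lemma hat_zero {δ : ℝ} (hδ : 0 ≤ δ) : hat δ 0 = δ := by
  simp only [hat, zero_add, zero_sub, max_self]
  rw [max_eq_right hδ, max_eq_left (neg_nonpos.mpr hδ)]
  ring

lemma hat_eq_zero {δ s : ℝ} (hδ : 0 ≤ δ) (hs : δ ≤ |s|) : hat δ s = 0 := by
  rcases le_abs.mp hs with h | h
  · rw [hat, max_eq_right (by linarith), max_eq_right (by linarith), max_eq_right (by linarith)]
    ring
  · rw [hat, max_eq_left (by linarith), max_eq_left (by linarith), max_eq_left (by linarith)]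
    ring

lemma FF_hat {d : ℕ} (a w : Fin d → ℝ) (c δ : ℝ) (z : Fin d → ℝ) :
    FF 1 (vecMulVec w ![1, -2, 1]) (replicateRow (Fin 3) a) ![δ - c, -c, -δ - c] z =
      z + hat δ (a ⬝ᵥ z - c) • w := by
  rw [FF, one_smul, vecMulVec_mulVec, op_smul_eq_smul, replicateRow_mulVec_eq_const]
  congr 2
  simp only [hat, dotProduct, Fin.sum_univ_three, Function.const_apply, cons_val_zero,
    cons_val_one, cons_val]
  ring_nf

/-- **"Hat function" feed-forward layer.** A feed-forward layer of width 3 can move exactly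
one of finitely many pairwise distinct points to an arbitrary target, keeping the rest fixed. -/
theorem hat_feed_forward {d m : ℕ} (x : Fin m → (Fin d → ℝ))
    (hinj : Function.Injective x) (i : Fin m) (y : Fin d → ℝ) :
    ∃ (η : ℝ) (W : Matrix (Fin d) (Fin 3) ℝ) (U : Matrix (Fin 3) (Fin d) ℝ) (b : Fin 3 → ℝ),
      FF η W U b (x i) = y ∧ ∀ j, j ≠ i → FF η W U b (x j) = x j := by
  obtain ⟨a, ha⟩ := exists_dotProduct_injective hinj
  obtain ⟨δ, hδ, hgap⟩ := exists_pos_le_dist_of_injective ha i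
  refine ⟨1, vecMulVec (δ⁻¹ • (y - x i)) ![1, -2, 1], replicateRow (Fin 3) a,
    ![δ - a ⬝ᵥ x i, -(a ⬝ᵥ x i), -δ - a ⬝ᵥ x i], ?_, fun j hj => ?_⟩
  · rw [FF_hat, sub_self, hat_zero hδ.le, smul_inv_smul₀ hδ.ne', add_sub_cancel]
  · rw [FF_hat, hat_eq_zero hδ.le (Real.dist_eq _ _ ▸ hgap j hj), zero_smul, add_zero]
end

section
/- Fix a tuple X = (x_1, …, x_n) of vectors in ℝ^d, scalars ρ, α ∈ ℝ, and a matrix A ∈ ℝ^{d×d}. Define the hardmax self-attention outputs SA^0_i(X) = ρ x_i + α M^0_i(X, A) and the softmax self-attention outputs SA^τ_i(X) = ρ x_i + α M^τ_i(X, A) for τ > 0. Suppose there exists ε > 0 such that ‖SA^0_i(X) − SA^0_{i'}(X)‖ > ε for all i ≠ i' (Euclidean norm). Then there exists τ₀ > 0 such that for all 0 < τ ≤ τ₀ and all i ≠ i', ‖SA^τ_i(X) − SA^τ_{i'}(X)‖ > ε/2; in particular the softmax outputs are pairwise distinct. -/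
open Filter Topology Matrix

/-- Hardmax average: `M^0_i(X,A) = (1/|C_i(X,A)|) Σ_{ℓ ∈ C_i(X,A)} x_ℓ`. -/
noncomputable def hardmaxAvg {d n : ℕ} (X : Fin n → (Fin d → ℝ))
    (A : Matrix (Fin d) (Fin d) ℝ) (i : Fin n) : Fin d → ℝ :=
  ((cluster X A i).card : ℝ)⁻¹ • ∑ ℓ ∈ cluster X A i, X ℓ

/-- Softmax average with temperature `τ`: `M^τ_i(X,A) = Σ_ℓ π^τ_{iℓ}(X,A) x_ℓ`. -/
noncomputable def softmaxAvg {d n : ℕ} (τ : ℝ) (X : Fin n → (Fin d → ℝ))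
    (A : Matrix (Fin d) (Fin d) ℝ) (i : Fin n) : Fin d → ℝ :=
  ∑ ℓ, (Real.exp ((A.mulVec (X i) ⬝ᵥ X ℓ) / τ) /
    ∑ k, Real.exp ((A.mulVec (X i) ⬝ᵥ X k) / τ)) • X ℓ

/-- Euclidean norm on `ℝ^d` (viewed as `Fin d → ℝ`). -/
noncomputable def eucNorm {d : ℕ} (x : Fin d → ℝ) : ℝ :=
  Real.sqrt (∑ t, x t ^ 2)

/-!
As `τ → 0⁺` the softmax weights `exp (s ℓ / τ) / Σₖ exp (s k / τ)` converge to the uniform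
distribution on the argmax set of `s`: after dividing numerator and denominator by
`exp (max s / τ)`, every term off the argmax set is `exp (c / τ)` with `c < 0`. Hence the softmax
averages converge to the hardmax averages, so the self-attention outputs and the norms of their
differences converge as well, and a strict inequality `ε / 2 < ε < ‖SA⁰ᵢ - SA⁰ᵢ'‖` between
limits persists for all small enough temperatures.
-/

lemma tendsto_exp_div_nhdsGT_zero_of_neg {c : ℝ} (hc : c < 0) :
    Tendsto (fun τ : ℝ => Real.exp (c / τ)) (𝓝[>] 0) (𝓝 0) := by
  have hdiv : Tendsto (fun τ : ℝ => c / τ) (𝓝[>] 0) atBot := by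
    simpa only [div_eq_mul_inv] using (tendsto_const_mul_atBot_of_neg hc).2 tendsto_inv_nhdsGT_zero
  exact Real.tendsto_exp_atBot.comp hdiv

section Softmax

variable {ι : Type*} {s : ι → ℝ}

lemma tendsto_exp_sub_div_nhdsGT_zero {m : ℝ} (hm : ∀ k, s k ≤ m) (k : ι) :
    Tendsto (fun τ : ℝ => Real.exp ((s k - m) / τ)) (𝓝[>] 0)
      (𝓝 (if s k = m then 1 else 0)) := by
  split_ifs with hk
  · simp [hk]
  · exact tendsto_exp_div_nhdsGT_zero_of_neg (sub_neg.2 ((hm k).lt_of_ne hk))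

variable [Fintype ι]

lemma softmax_weight_eq_exp_sub (m τ : ℝ) (ℓ : ι) :
    Real.exp (s ℓ / τ) / ∑ k, Real.exp (s k / τ)
      = Real.exp ((s ℓ - m) / τ) / ∑ k, Real.exp ((s k - m) / τ) := by
  have hshift : ∀ k, Real.exp ((s k - m) / τ) = Real.exp (s k / τ) * Real.exp (-(m / τ)) := by
    intro k
    rw [← Real.exp_add, sub_div, sub_eq_add_neg]
  simp only [hshift, ← Finset.sum_mul]
  rw [mul_div_mul_right _ _ (Real.exp_ne_zero _)]

variable [DecidableEq ι] {S : Finset ι}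

lemma tendsto_softmax_weight_nhdsGT_zero [Nonempty ι] (hS : ∀ j, j ∈ S ↔ ∀ ℓ, s ℓ ≤ s j)
    (ℓ : ι) :
    Tendsto (fun τ : ℝ => Real.exp (s ℓ / τ) / ∑ k, Real.exp (s k / τ)) (𝓝[>] 0)
      (𝓝 (if ℓ ∈ S then (S.card : ℝ)⁻¹ else 0)) := by
  obtain ⟨j, hj⟩ := Finite.exists_max s
  have hmem : ∀ k, k ∈ S ↔ s k = s j :=
    fun k => (hS k).trans ⟨fun h => le_antisymm (hj k) (h j), fun h ℓ => h ▸ hj ℓ⟩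
  have hcard : (S.card : ℝ) ≠ 0 := Nat.cast_ne_zero.2 (Finset.card_ne_zero_of_mem ((hmem j).2 rfl))
  have hnum : ∀ k, Tendsto (fun τ : ℝ => Real.exp ((s k - s j) / τ)) (𝓝[>] 0)
      (𝓝 (if k ∈ S then 1 else 0)) := by
    simpa only [hmem] using tendsto_exp_sub_div_nhdsGT_zero hj
  have hden : Tendsto (fun τ : ℝ => ∑ k, Real.exp ((s k - s j) / τ)) (𝓝[>] 0) (𝓝 S.card) := by
    convert tendsto_finsetSum Finset.univ fun k _ => hnum k using 2
    simp
  simp only [softmax_weight_eq_exp_sub (s j)]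
  rw [show (if ℓ ∈ S then (S.card : ℝ)⁻¹ else 0) = (if ℓ ∈ S then 1 else 0) / S.card by
    split_ifs <;> simp]
  exact (hnum ℓ).div hden hcard

lemma tendsto_softmax_average_nhdsGT_zero [Nonempty ι] {E : Type*} [AddCommGroup E]
    [Module ℝ E] [TopologicalSpace E] [ContinuousAdd E] [ContinuousSMul ℝ E]
    (hS : ∀ j, j ∈ S ↔ ∀ ℓ, s ℓ ≤ s j) (v : ι → E) :
    Tendsto (fun τ : ℝ => ∑ ℓ, (Real.exp (s ℓ / τ) / ∑ k, Real.exp (s k / τ)) • v ℓ) (𝓝[>] 0)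
      (𝓝 ((S.card : ℝ)⁻¹ • ∑ ℓ ∈ S, v ℓ)) := by
  convert tendsto_finsetSum Finset.univ fun ℓ _ =>
    (tendsto_softmax_weight_nhdsGT_zero hS ℓ).smul_const (v ℓ) using 2
  simp only [ite_smul, zero_smul, Finset.sum_ite_mem, Finset.univ_inter, Finset.smul_sum]

end Softmax

lemma tendsto_softmaxAvg_nhdsGT_zero {d n : ℕ} (X : Fin n → (Fin d → ℝ))
    (A : Matrix (Fin d) (Fin d) ℝ) (i : Fin n) :
    Tendsto (fun τ => softmaxAvg τ X A i) (𝓝[>] 0) (𝓝 (hardmaxAvg X A i)) :=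
  haveI : Nonempty (Fin n) := ⟨i⟩
  tendsto_softmax_average_nhdsGT_zero (fun j => by simp [cluster]) X

lemma continuous_eucNorm {d : ℕ} : Continuous (eucNorm (d := d)) := by
  unfold eucNorm
  fun_prop

/-- **Softmax self-attention preserves separation for small temperature.** If the hardmax
self-attention outputs `SA^0_i(X) = ρ x_i + α M^0_i(X,A)` are `ε`-separated, then for all
sufficiently small `τ > 0` the softmax outputs `SA^τ_i(X) = ρ x_i + α M^τ_i(X,A)` are
`ε/2`-separated; in particular they are pairwise distinct. -/
theorem softmax_preserves_separation {d n : ℕ} (X : Fin n → (Fin d → ℝ))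
    (ρ α : ℝ) (A : Matrix (Fin d) (Fin d) ℝ) (ε : ℝ) (hε : 0 < ε)
    (hsep : ∀ i i' : Fin n, i ≠ i' →
      ε < eucNorm ((ρ • X i + α • hardmaxAvg X A i) - (ρ • X i' + α • hardmaxAvg X A i'))) :
    ∃ τ₀ : ℝ, 0 < τ₀ ∧ ∀ τ : ℝ, 0 < τ → τ ≤ τ₀ → ∀ i i' : Fin n, i ≠ i' →
      ε / 2 < eucNorm ((ρ • X i + α • softmaxAvg τ X A i) -
        (ρ • X i' + α • softmaxAvg τ X A i')) := by
  have hattn : ∀ i, Tendsto (fun τ => ρ • X i + α • softmaxAvg τ X A i) (𝓝[>] 0)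
      (𝓝 (ρ • X i + α • hardmaxAvg X A i)) :=
    fun i => tendsto_const_nhds.add ((tendsto_softmaxAvg_nhdsGT_zero X A i).const_smul α)
  have heventually : ∀ᶠ τ in 𝓝[>] 0, ∀ i i' : Fin n, i ≠ i' →
      ε / 2 < eucNorm ((ρ • X i + α • softmaxAvg τ X A i) -
        (ρ • X i' + α • softmaxAvg τ X A i')) := by
    simp only [eventually_all]
    intro i i' hii
    have hdist := (continuous_eucNorm.tendsto _).comp ((hattn i).sub (hattn i'))
    exact hdist.eventually (eventually_gt_nhds (by linarith [hsep i i' hii]))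
  obtain ⟨τ₀, hτ₀, hsmall⟩ := (nhdsGT_basis_Ioc 0).eventually_iff.1 heventually
  exact ⟨τ₀, hτ₀, fun τ hτ hττ₀ => hsmall ⟨hτ, hττ₀⟩⟩
end
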